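/- arXiv:2305.03656 — 2 statements merged into one kernel-verified Lean document; each statement's English description precedes it below -/
import Mathlib

section
/- Let (M,d) be a metric space and X, Y ⊆ M. Assume there exists a ∈ (0,∞) such that for each ρ ∈ (0,a) and each x' ∈ X there exists x'' ∈ X with d(x',x'') = ρ. Let υ_Y ∈ (0,∞), β ∈ (0,1], s₂ ∈ [β,∞), s₃ ∈ (0,1], with s₂ − β = υ_Y and in addition s₃ > β. Let ν be a measure on a σ-algebra of subsets of Y containing the Borel subsets of Y, with ν(B(x,r) ∩ Y) < ∞ for all x ∈ X and r > 0, and ν(Y) < ∞. Let Y be strongly upper υ_Y-Ahlfors regular with respect to X and let Z ∈ 𝒦_{υ_Y,s₂,s₃}(X×Y). If there exists C > 0 such that for every g ∈ C^{0,β}(X∪Y) the function Q[Z,g,1] is bounded and β-Hölder continuous on X with sup-norm plus β-Hölder seminorm at most C·|g|_β, then sup_{x∈X} sup_{r>0} |∫_{Y\B(x,r)} Z(x,y) dν(y)| < ∞. -/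
open MeasureTheory Metric Set
open scoped ENNReal

noncomputable section

variable {M : Type*} [MetricSpace M] [MeasurableSpace M] [BorelSpace M]

/-- `Y` is upper `υ`-Ahlfors regular with respect to `X`:
there exist `r₀ ∈ (0,∞]` and `c > 0` with `ν (B(x,r) ∩ Y) ≤ c rᵘ` for `x ∈ X`, `0 < r < r₀`. -/
def UpperAhlforsRegular (ν : Measure M) (X Y : Set M) (υ : ℝ) : Prop :=
  ∃ c : ℝ, 0 < c ∧ ∃ r₀ : ℝ≥0∞, 0 < r₀ ∧
    ∀ x ∈ X, ∀ r : ℝ, 0 < r → ENNReal.ofReal r < r₀ →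
      ν (ball x r ∩ Y) ≤ ENNReal.ofReal (c * r ^ υ)

/-- `Y` is strongly upper `υ`-Ahlfors regular with respect to `X`. -/
def StronglyUpperAhlforsRegular (ν : Measure M) (X Y : Set M) (υ : ℝ) : Prop :=
  ∃ c : ℝ, 0 < c ∧ ∃ r₀ : ℝ≥0∞, 0 < r₀ ∧
    ∀ x ∈ X, ∀ r₁ r₂ : ℝ, 0 ≤ r₁ → r₁ < r₂ → ENNReal.ofReal r₂ < r₀ →
      ν ((ball x r₂ \ ball x r₁) ∩ Y) ≤ ENNReal.ofReal (c * (r₂ ^ υ - r₁ ^ υ))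

/-- the set of values `d(x,y)^{s₁} |K(x,y)|`, `x ∈ X`, `y ∈ Y`, `x ≠ y`. -/
def kernelSet₁ (X Y : Set M) (s₁ : ℝ) (K : M → M → ℂ) : Set ℝ :=
  {t | ∃ x ∈ X, ∃ y ∈ Y, x ≠ y ∧ t = dist x y ^ s₁ * ‖K x y‖}

/-- the set of values `(d(x',y)^{s₂}/d(x',x'')^{s₃}) |K(x',y) - K(x'',y)|`,
`x', x'' ∈ X`, `x' ≠ x''`, `y ∈ Y \ B(x', 2 d(x',x''))`. -/
def kernelSet₂ (X Y : Set M) (s₂ s₃ : ℝ) (K : M → M → ℂ) : Set ℝ :=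
  {t | ∃ x' ∈ X, ∃ x'' ∈ X, x' ≠ x'' ∧ ∃ y ∈ Y \ ball x' (2 * dist x' x''),
        t = dist x' y ^ s₂ / dist x' x'' ^ s₃ * ‖K x' y - K x'' y‖}

/-- membership in the kernel class `𝒦_{s₁,s₂,s₃}(X×Y)`: continuity off the diagonal
together with finiteness of the two suprema defining the norm. -/
def MemK (X Y : Set M) (s₁ s₂ s₃ : ℝ) (K : M → M → ℂ) : Prop :=
  ContinuousOn (fun p : M × M => K p.1 p.2) ((X ×ˢ Y) \ {p : M × M | p.1 = p.2}) ∧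
  BddAbove (kernelSet₁ X Y s₁ K) ∧ BddAbove (kernelSet₂ X Y s₂ s₃ K)

/-- the norm `‖K‖` of the class `𝒦_{s₁,s₂,s₃}(X×Y)`. -/
def kNorm (X Y : Set M) (s₁ s₂ s₃ : ℝ) (K : M → M → ℂ) : ℝ :=
  sSup (kernelSet₁ X Y s₁ K) + sSup (kernelSet₂ X Y s₂ s₃ K)

/-- the set of values `|∫_{Y \ B(x,r)} K(x,y) dν(y)|`, `x ∈ X`, `r > 0`
(the maximal function values). -/
def maxFunSet (ν : Measure M) (X Y : Set M) (K : M → M → ℂ) : Set ℝ :=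
  {t | ∃ x ∈ X, ∃ r : ℝ, 0 < r ∧ t = ‖∫ y in Y \ ball x r, K x y ∂ν‖}

/-- membership in the kernel class `𝒦♯_{s₁,s₂,s₃}(X×Y)`. -/
def MemKSharp (ν : Measure M) (X Y : Set M) (s₁ s₂ s₃ : ℝ) (K : M → M → ℂ) : Prop :=
  MemK X Y s₁ s₂ s₃ K ∧
  (∀ x ∈ X, ∀ r : ℝ, 0 < r → IntegrableOn (K x) (Y \ ball x r) ν) ∧
  BddAbove (maxFunSet ν X Y K)

/-- the norm of the class `𝒦♯_{s₁,s₂,s₃}(X×Y)`. -/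
def kNormSharp (ν : Measure M) (X Y : Set M) (s₁ s₂ s₃ : ℝ) (K : M → M → ℂ) : ℝ :=
  kNorm X Y s₁ s₂ s₃ K + sSup (maxFunSet ν X Y K)

/-- the set of Hölder quotients `|g x - g y| / d(x,y)^β`, `x, y ∈ D`, `x ≠ y`. -/
def holderSet (D : Set M) (β : ℝ) (g : M → ℂ) : Set ℝ :=
  {t | ∃ x ∈ D, ∃ y ∈ D, x ≠ y ∧ t = ‖g x - g y‖ / dist x y ^ β}

/-- `g` is `β`-Hölder continuous on `D`. -/
def IsHolderOn (D : Set M) (β : ℝ) (g : M → ℂ) : Prop :=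
  BddAbove (holderSet D β g)

/-- the `β`-Hölder seminorm `|g|_β` of `g` on `D`. -/
def holderSemi (D : Set M) (β : ℝ) (g : M → ℂ) : ℝ :=
  sSup (holderSet D β g)

def supValSet (D : Set M) (f : M → ℂ) : Set ℝ := {t | ∃ x ∈ D, t = ‖f x‖}

/-- `f` is bounded on `D`. -/
def BoundedOnSet (D : Set M) (f : M → ℂ) : Prop := BddAbove (supValSet D f)

/-- the sup-norm of `f` on `D`. -/
def supNormOn (D : Set M) (f : M → ℂ) : ℝ := sSup (supValSet D f)

/-- `Q[Z,g,1](x) = ∫_Y Z(x,y) (g(x) - g(y)) dν(y)`. -/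
def Qop (ν : Measure M) (Y : Set M) (Z : M → M → ℂ) (g : M → ℂ) (x : M) : ℂ :=
  ∫ y in Y, Z x y * (g x - g y) ∂ν

/-- the modulus of continuity `ω_θ`. -/
def omegaMod (θ r : ℝ) : ℝ :=
  if r ≤ 0 then 0
  else if r ≤ Real.exp (-1 / θ) then r ^ θ * |Real.log r|
  else Real.exp (-1 / θ) ^ θ * |Real.log (Real.exp (-1 / θ))|

/-!
For large `r` the tail integral is controlled by the size bound `|Z(x,y)| ≤ N d(x,y)^{-υ}` and
`ν(Y) < ∞`. For small `r` pick `x' ∈ X` with `d(x,x') = r` and test `Q` on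
`g = min 1 (d(x,·)/r)`, whose `β`-Hölder seminorm is at most `r^{-β}`, so the hypothesis gives
`|Q[Z,g,1](x) - Q[Z,g,1](x')| ≤ C`. As `g = 1` off `B(x,r)`, the tail integral equals
`-Q[Z,g,1](x)` up to an integral over `B(x,r)`, while `Q[Z,g,1](x')` is an integral over
`B(x',2r)`. Both error terms are at most `(N/r) ∫_{B(z,2r)} d(z,y)^{1-υ} dν(y) ≲ cN`, by upper
Ahlfors regularity summed over dyadic annuli.
-/

open Filter Topology

theorem norm_integral_le_of_lintegral_enorm_le {α E : Type*} [MeasurableSpace α]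
    [NormedAddCommGroup E] [NormedSpace ℝ E] {μ : Measure α} {f : α → E} {B : ℝ} (hB : 0 ≤ B)
    (h : ∫⁻ y, ‖f y‖ₑ ∂μ ≤ ENNReal.ofReal B) : ‖∫ y, f y ∂μ‖ ≤ B :=
  (ENNReal.ofReal_le_ofReal_iff hB).1
    ((ofReal_norm _).trans_le ((enorm_integral_le_lintegral_enorm f).trans h))

section Measure

variable {α : Type*} [MetricSpace α] [MeasurableSpace α] {μ : Measure α} {x : α}
  {c υ : ℝ}

theorem measure_singleton_eq_zero_of_measure_ball_le (hυ : 0 < υ) {ρ : ℝ} (hρ : 0 < ρ)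
    (h : ∀ r, 0 < r → r ≤ ρ → μ (ball x r) ≤ ENNReal.ofReal (c * r ^ υ)) : μ {x} = 0 := by
  have hlim : Tendsto (fun r : ℝ => ENNReal.ofReal (c * r ^ υ)) (𝓝[>] 0) (𝓝 0) := by
    have : ContinuousAt (fun r : ℝ => c * r ^ υ) 0 :=
      continuousAt_const.mul (Real.continuousAt_rpow_const _ _ (Or.inr hυ.le))
    simpa [Real.zero_rpow hυ.ne'] using
      (ENNReal.tendsto_ofReal this.tendsto).mono_left nhdsWithin_le_nhds
  refine le_antisymm (ge_of_tendsto hlim ?_) zero_le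
  filter_upwards [Ioc_mem_nhdsGT hρ] with r hr
  exact (measure_mono (singleton_subset_iff.2 (mem_ball_self hr.1))).trans (h r hr.1 hr.2)

theorem exists_half_pow_mul_le_lt {d s : ℝ} (hd : 0 < d) (hds : d < s) :
    ∃ k : ℕ, s * (1 / 2) ^ (k + 1) ≤ d ∧ d < s * (1 / 2) ^ k := by
  have hs : 0 < s := hd.trans hds
  have hex : ∃ k : ℕ, s * (1 / 2) ^ (k + 1) ≤ d := by
    obtain ⟨n, hn⟩ := exists_pow_lt_of_lt_one (div_pos hd hs) (by norm_num : (1 / 2 : ℝ) < 1)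
    refine ⟨n, ?_⟩
    rw [lt_div_iff₀ hs] at hn
    calc s * (1 / 2) ^ (n + 1) ≤ s * (1 / 2) ^ n :=
          mul_le_mul_of_nonneg_left (pow_le_pow_of_le_one (by norm_num) (by norm_num) n.le_succ)
            hs.le
      _ ≤ d := by linarith
  refine ⟨Nat.find hex, Nat.find_spec hex, ?_⟩
  cases hk : Nat.find hex with
  | zero => simpa using hds
  | succ k => simpa using Nat.find_min hex (m := k) (by omega)

theorem lintegral_ball_sdiff_ball_dist_rpow_le [OpensMeasurableSpace α] (hυ : 0 ≤ υ)
    {a b : ℝ} (ha : 0 < a) :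
    ∫⁻ y in ball x b \ ball x a, ENNReal.ofReal (dist x y ^ (1 - υ)) ∂μ ≤
      ENNReal.ofReal (b / a ^ υ) * μ (ball x b) := by
  have hpt : ∀ y ∈ ball x b \ ball x a,
      ENNReal.ofReal (dist x y ^ (1 - υ)) ≤ ENNReal.ofReal (b / a ^ υ) := by
    rintro y ⟨hyb, hya⟩
    rw [mem_ball, dist_comm] at hyb hya
    have hay : a ≤ dist x y := not_lt.1 hya
    rw [Real.rpow_sub (ha.trans_le hay), Real.rpow_one]
    gcongr
    exact dist_nonneg.trans hyb.le
  calc ∫⁻ y in ball x b \ ball x a, ENNReal.ofReal (dist x y ^ (1 - υ)) ∂μ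
      ≤ ∫⁻ _ in ball x b \ ball x a, ENNReal.ofReal (b / a ^ υ) ∂μ :=
        setLIntegral_mono measurable_const hpt
    _ ≤ ENNReal.ofReal (b / a ^ υ) * μ (ball x b) := by
        rw [setLIntegral_const]
        gcongr
        exact sdiff_subset

/-- Summing the previous bound over the dyadic annuli `B(x, s 2⁻ᵏ) \ B(x, s 2⁻ᵏ⁻¹)`. -/
theorem lintegral_ball_dist_rpow_le [OpensMeasurableSpace α] (hυ : 0 < υ) (hc : 0 ≤ c)
    {s : ℝ} (hs : 0 < s) (h : ∀ r, 0 < r → r ≤ s → μ (ball x r) ≤ ENNReal.ofReal (c * r ^ υ)) :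
    ∫⁻ y in ball x s, ENNReal.ofReal (dist x y ^ (1 - υ)) ∂μ ≤
      ENNReal.ofReal (2 ^ (υ + 1) * c * s) := by
  set t : ℕ → ℝ := fun k => s * (1 / 2) ^ k with ht_def
  have ht : ∀ k, 0 < t k := fun k => by positivity
  have hts : ∀ k, t k ≤ s := fun k =>
    mul_le_of_le_one_right hs.le (pow_le_one₀ (by norm_num) (by norm_num))
  have hcover : ball x s \ {x} ⊆ ⋃ k, ball x (t k) \ ball x (t (k + 1)) := by
    rintro y ⟨hy, hyx⟩
    rw [mem_ball, dist_comm] at hy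
    obtain ⟨k, hk, hk'⟩ := exists_half_pow_mul_le_lt (dist_pos.2 (Ne.symm hyx)) hy
    refine mem_iUnion.2 ⟨k, ?_, ?_⟩ <;> rw [mem_ball, dist_comm]
    · exact hk'
    · exact not_lt.2 hk
  have hpiece : ∀ k, ∫⁻ y in ball x (t k) \ ball x (t (k + 1)),
      ENNReal.ofReal (dist x y ^ (1 - υ)) ∂μ ≤ ENNReal.ofReal (2 ^ υ * c * s * (1 / 2) ^ k) := by
    intro k
    have htk : t k = 2 * t (k + 1) := by simp only [ht_def, pow_succ]; ring
    calc _ ≤ ENNReal.ofReal (t k / t (k + 1) ^ υ) * μ (ball x (t k)) :=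
          lintegral_ball_sdiff_ball_dist_rpow_le hυ.le (ht _)
      _ ≤ ENNReal.ofReal (t k / t (k + 1) ^ υ) * ENNReal.ofReal (c * t k ^ υ) := by
          gcongr
          exact h _ (ht k) (hts k)
      _ = ENNReal.ofReal (2 ^ υ * c * s * (1 / 2) ^ k) := by
          rw [← ENNReal.ofReal_mul (by positivity)]
          congr 1
          have hpos := (Real.rpow_pos_of_pos (ht (k + 1)) υ).ne'
          rw [htk, Real.mul_rpow (by norm_num) (ht _).le]
          field_simp
          simp only [ht_def, pow_succ]
          ring
  have hnull : μ {x} = 0 := measure_singleton_eq_zero_of_measure_ball_le hυ hs h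
  calc ∫⁻ y in ball x s, ENNReal.ofReal (dist x y ^ (1 - υ)) ∂μ
      = ∫⁻ y in ball x s \ {x}, ENNReal.ofReal (dist x y ^ (1 - υ)) ∂μ :=
        (setLIntegral_congr (sdiff_null_ae_eq_self hnull)).symm
    _ ≤ ∑' k, ∫⁻ y in ball x (t k) \ ball x (t (k + 1)), ENNReal.ofReal (dist x y ^ (1 - υ)) ∂μ :=
        (lintegral_mono_set hcover).trans (lintegral_iUnion_le _ _)
    _ ≤ ∑' k, ENNReal.ofReal (2 ^ υ * c * s * (1 / 2) ^ k) := ENNReal.tsum_le_tsum hpiece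
    _ = ENNReal.ofReal (2 ^ (υ + 1) * c * s) := by
        rw [← ENNReal.ofReal_tsum_of_nonneg (fun k => by positivity)
          (summable_geometric_two.mul_left _), tsum_mul_left, tsum_geometric_two,
          Real.rpow_add_one two_ne_zero]
        ring_nf

end Measure

section Kernel

variable {α : Type*} [MetricSpace α] {x : α} {Y : Set α} {K g : α → ℂ} {c υ N r : ℝ}

theorem norm_le_div_rpow_of_le_dist (hυ : 0 ≤ υ) (hN : 0 ≤ N) (hr : 0 < r)
    (hK : ∀ y ∈ Y, x ≠ y → ‖K y‖ ≤ N / dist x y ^ υ) {y : α} (hy : y ∈ Y)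
    (hry : r ≤ dist x y) : ‖K y‖ ≤ N / r ^ υ :=
  (hK y hy (dist_pos.1 (hr.trans_le hry))).trans (by gcongr)

variable [MeasurableSpace α] {μ : Measure α}

theorem aestronglyMeasurable_restrict_of_continuousOn_sdiff_singleton [OpensMeasurableSpace α]
    {E : Type*} [TopologicalSpace E] [TopologicalSpace.PseudoMetrizableSpace E]
    [SecondCountableTopology E] {f : α → E} {s : Set α} (hf : ContinuousOn f (s \ {x}))
    (hs : MeasurableSet s) (hx : μ.restrict s {x} = 0) : AEStronglyMeasurable f (μ.restrict s) := by
  rw [Measure.restrict_apply (measurableSet_singleton x), inter_comm] at hx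
  rw [← Measure.restrict_congr_set (sdiff_ae_eq_self.2 hx)]
  exact hf.aestronglyMeasurable (hs.diff (measurableSet_singleton x))

theorem lintegral_inter_ball_enorm_mul_sub_le [OpensMeasurableSpace α] (hυ : 0 < υ)
    (hc : 0 ≤ c) (hN : 0 ≤ N) (hr : 0 < r) {s : ℝ} (hs : 0 < s)
    (hK : ∀ y ∈ Y, x ≠ y → ‖K y‖ ≤ N / dist x y ^ υ) (hg : ∀ y, ‖g x - g y‖ ≤ dist x y / r)
    (hreg : ∀ t, 0 < t → t ≤ s → μ (ball x t ∩ Y) ≤ ENNReal.ofReal (c * t ^ υ)) :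
    ∫⁻ y in Y ∩ ball x s, ‖K y * (g x - g y)‖ₑ ∂μ ≤
      ENNReal.ofReal (2 ^ (υ + 1) * c * N * s / r) := by
  have hpt : ∀ y ∈ Y ∩ ball x s, ‖K y * (g x - g y)‖ₑ ≤
      ENNReal.ofReal (N / r) * ENNReal.ofReal (dist x y ^ (1 - υ)) := by
    rintro y ⟨hy, -⟩
    rw [← ofReal_norm, ← ENNReal.ofReal_mul (by positivity)]
    apply ENNReal.ofReal_le_ofReal
    rcases eq_or_ne x y with rfl | hxy
    · simp only [sub_self, mul_zero, norm_zero]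
      positivity
    calc ‖K y * (g x - g y)‖ ≤ N / dist x y ^ υ * (dist x y / r) := by
          rw [norm_mul]
          exact mul_le_mul (hK y hy hxy) (hg y) (norm_nonneg _) (by positivity)
      _ = N / r * dist x y ^ (1 - υ) := by
          rw [Real.rpow_sub (dist_pos.2 hxy), Real.rpow_one]
          ring
  have hball : ∫⁻ y in ball x s, ENNReal.ofReal (dist x y ^ (1 - υ)) ∂μ.restrict Y ≤
      ENNReal.ofReal (2 ^ (υ + 1) * c * s) :=
    lintegral_ball_dist_rpow_le hυ hc hs fun t ht hts =>
      (Measure.restrict_apply measurableSet_ball).trans_le (hreg t ht hts)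
  calc ∫⁻ y in Y ∩ ball x s, ‖K y * (g x - g y)‖ₑ ∂μ
      ≤ ∫⁻ y in Y ∩ ball x s, ENNReal.ofReal (N / r) * ENNReal.ofReal (dist x y ^ (1 - υ)) ∂μ :=
        setLIntegral_mono (by fun_prop) hpt
    _ = ENNReal.ofReal (N / r) *
          ∫⁻ y in ball x s, ENNReal.ofReal (dist x y ^ (1 - υ)) ∂μ.restrict Y := by
        rw [lintegral_const_mul' _ _ ENNReal.ofReal_ne_top,
          Measure.restrict_restrict measurableSet_ball, inter_comm]
    _ ≤ ENNReal.ofReal (N / r) * ENNReal.ofReal (2 ^ (υ + 1) * c * s) := by gcongr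
    _ = ENNReal.ofReal (2 ^ (υ + 1) * c * N * s / r) := by
        rw [← ENNReal.ofReal_mul (by positivity)]
        ring_nf

theorem norm_setIntegral_sdiff_ball_le (hY : μ Y < ⊤) (hυ : 0 ≤ υ) (hN : 0 ≤ N)
    (hK : ∀ y ∈ Y, x ≠ y → ‖K y‖ ≤ N / dist x y ^ υ) {T : ℝ} (hT : 0 < T) (hTr : T ≤ r) :
    ‖∫ y in Y \ ball x r, K y ∂μ‖ ≤ N / T ^ υ * μ.real Y := by
  have hbound : ∀ y ∈ Y \ ball x r, ‖K y‖ ≤ N / T ^ υ := fun y hy =>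
    norm_le_div_rpow_of_le_dist hυ hN hT hK hy.1
      (hTr.trans (by simpa [dist_comm] using hy.2))
  calc ‖∫ y in Y \ ball x r, K y ∂μ‖ ≤ N / T ^ υ * μ.real (Y \ ball x r) :=
        norm_setIntegral_le_of_norm_le_const ((measure_mono sdiff_subset).trans_lt hY) hbound
    _ ≤ N / T ^ υ * μ.real Y := by
        gcongr
        exacts [hY.ne, sdiff_subset]

theorem integrableOn_mul_sub [OpensMeasurableSpace α] (hY : μ Y < ⊤) (hυ : 0 < υ)
    (hc : 0 ≤ c) (hN : 0 ≤ N) (hr : 0 < r) (hKm : AEStronglyMeasurable K (μ.restrict Y))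
    (hgc : Continuous g) (hK : ∀ y ∈ Y, x ≠ y → ‖K y‖ ≤ N / dist x y ^ υ)
    (hg : ∀ y, ‖g x - g y‖ ≤ min 1 (dist x y / r))
    (hreg : ∀ t, 0 < t → t ≤ r → μ (ball x t ∩ Y) ≤ ENNReal.ofReal (c * t ^ υ)) :
    IntegrableOn (fun y => K y * (g x - g y)) Y μ := by
  have hm : AEStronglyMeasurable (fun y => K y * (g x - g y)) (μ.restrict Y) :=
    hKm.mul (continuous_const.sub hgc).aestronglyMeasurable
  have hfar : ∀ y ∈ Y \ ball x r, ‖K y * (g x - g y)‖ₑ ≤ ENNReal.ofReal (N / r ^ υ) := by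
    rintro y ⟨hy, hyr⟩
    rw [← ofReal_norm, norm_mul, ← mul_one (N / r ^ υ)]
    exact ENNReal.ofReal_le_ofReal (mul_le_mul
      (norm_le_div_rpow_of_le_dist hυ.le hN hr hK hy (by simpa [dist_comm] using hyr))
      ((hg y).trans (min_le_left _ _)) (norm_nonneg _) (by positivity))
  rw [← inter_union_sdiff Y (ball x r)]
  refine IntegrableOn.union ⟨hm.mono_set inter_subset_left, ?_⟩
    ⟨hm.mono_set sdiff_subset, ?_⟩
  · exact (lintegral_inter_ball_enorm_mul_sub_le hυ hc hN hr hr hK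
      (fun y => (hg y).trans (min_le_right _ _)) hreg).trans_lt ENNReal.ofReal_lt_top
  · calc ∫⁻ y in Y \ ball x r, ‖K y * (g x - g y)‖ₑ ∂μ
        ≤ ∫⁻ _ in Y \ ball x r, ENNReal.ofReal (N / r ^ υ) ∂μ :=
          setLIntegral_mono measurable_const hfar
      _ < ⊤ := by
          rw [setLIntegral_const]
          exact ENNReal.mul_lt_top ENNReal.ofReal_lt_top
            ((measure_mono sdiff_subset).trans_lt hY)

end Kernel

section Ramp

variable {α : Type*} [MetricSpace α] {x : α} {r β : ℝ}

theorem min_one_le_rpow {t : ℝ} (hβ0 : 0 < β) (hβ1 : β ≤ 1) (ht : 0 ≤ t) : min 1 t ≤ t ^ β := by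
  rcases le_total t 1 with h1 | h1
  · calc min 1 t ≤ t ^ (1 : ℝ) := by rw [Real.rpow_one]; exact min_le_right _ _
      _ ≤ t ^ β := Real.rpow_le_rpow_of_exponent_ge' ht h1 hβ0.le hβ1
  · exact (min_le_left _ _).trans (Real.one_le_rpow h1 hβ0.le)

def distRamp (x : α) (r : ℝ) (y : α) : ℂ := (min 1 (dist x y / r) : ℝ)

@[simp]
theorem distRamp_self : distRamp x r x = 0 := by simp [distRamp]

theorem distRamp_eq_one (hr : 0 < r) {y : α} (h : r ≤ dist x y) : distRamp x r y = 1 := by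
  simp [distRamp, (one_le_div hr).2 h]

theorem norm_distRamp_sub_le (hr : 0 < r) (u v : α) :
    ‖distRamp x r u - distRamp x r v‖ ≤ min 1 (dist u v / r) := by
  rw [distRamp, distRamp, ← Complex.ofReal_sub, Complex.norm_real, Real.norm_eq_abs]
  have hu : 0 ≤ dist x u / r := by positivity
  have hv : 0 ≤ dist x v / r := by positivity
  refine le_min ?_ ?_
  · rw [abs_sub_le_iff]
    constructor <;> linarith [min_le_left 1 (dist x u / r), min_le_left 1 (dist x v / r),
      le_min zero_le_one hu, le_min zero_le_one hv]
  · calc |min 1 (dist x u / r) - min 1 (dist x v / r)|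
        ≤ max |1 - 1| |dist x u / r - dist x v / r| := abs_min_sub_min_le_max _ _ _ _
      _ = |dist u x - dist v x| / r := by
          rw [sub_self, abs_zero, max_eq_right (abs_nonneg _), ← sub_div, abs_div, abs_of_pos hr,
            dist_comm x u, dist_comm x v]
      _ ≤ dist u v / r := by gcongr; exact abs_dist_sub_le u v x

theorem continuous_distRamp : Continuous (distRamp x r) :=
  Complex.continuous_ofReal.comp
    (continuous_const.min ((continuous_const.dist continuous_id).div_const r))

theorem inv_rpow_mem_upperBounds_holderSet_distRamp (hr : 0 < r) (hβ0 : 0 < β) (hβ1 : β ≤ 1)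
    (D : Set α) : (r ^ β)⁻¹ ∈ upperBounds (holderSet D β (distRamp x r)) := by
  rintro _ ⟨u, -, v, -, huv, rfl⟩
  rw [div_le_iff₀ (Real.rpow_pos_of_pos (dist_pos.2 huv) β)]
  calc ‖distRamp x r u - distRamp x r v‖ ≤ (dist u v / r) ^ β :=
        (norm_distRamp_sub_le hr u v).trans (min_one_le_rpow hβ0 hβ1 (by positivity))
    _ = (r ^ β)⁻¹ * dist u v ^ β := by
        rw [Real.div_rpow dist_nonneg hr.le]
        ring

theorem isHolderOn_distRamp (hr : 0 < r) (hβ0 : 0 < β) (hβ1 : β ≤ 1) (D : Set α) :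
    IsHolderOn D β (distRamp x r) :=
  ⟨_, inv_rpow_mem_upperBounds_holderSet_distRamp hr hβ0 hβ1 D⟩

theorem holderSemi_distRamp_le (hr : 0 < r) (hβ0 : 0 < β) (hβ1 : β ≤ 1) (D : Set α) :
    holderSemi D β (distRamp x r) ≤ (r ^ β)⁻¹ :=
  Real.sSup_le (inv_rpow_mem_upperBounds_holderSet_distRamp hr hβ0 hβ1 D) (by positivity)

theorem norm_sub_le_of_supNormOn_add_holderSemi_le {D : Set α} {f : α → ℂ} {B : ℝ}
    (hb : BoundedOnSet D f) (hH : IsHolderOn D β f) (hB : supNormOn D f + holderSemi D β f ≤ B)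
    {y : α} (hx : x ∈ D) (hy : y ∈ D) (hxy : x ≠ y) : ‖f x - f y‖ ≤ B * dist x y ^ β := by
  have hsup : 0 ≤ supNormOn D f := (norm_nonneg _).trans (le_csSup hb ⟨x, hx, rfl⟩)
  have hq : ‖f x - f y‖ / dist x y ^ β ≤ holderSemi D β f := le_csSup hH ⟨x, hx, y, hy, hxy, rfl⟩
  rw [div_le_iff₀ (Real.rpow_pos_of_pos (dist_pos.2 hxy) β)] at hq
  exact hq.trans (by gcongr; linarith)

theorem norm_sub_le_of_le_mul_holderSemi_distRamp {D D' : Set α} {f : α → ℂ} {C : ℝ} {x' : α}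
    (hC : 0 ≤ C) (hr : 0 < r) (hβ0 : 0 < β) (hβ1 : β ≤ 1) (hb : BoundedOnSet D f)
    (hH : IsHolderOn D β f)
    (hB : supNormOn D f + holderSemi D β f ≤ C * holderSemi D' β (distRamp x r))
    (hx : x ∈ D) (hx' : x' ∈ D) (hdist : dist x x' = r) : ‖f x - f x'‖ ≤ C :=
  calc ‖f x - f x'‖ ≤ C * holderSemi D' β (distRamp x r) * dist x x' ^ β :=
        norm_sub_le_of_supNormOn_add_holderSemi_le hb hH hB hx hx' (dist_pos.1 (hdist ▸ hr))
    _ ≤ C * (r ^ β)⁻¹ * r ^ β := by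
        rw [hdist]
        gcongr
        exact holderSemi_distRamp_le hr hβ0 hβ1 _
    _ = C := by field_simp

end Ramp

section Qop

variable {α : Type*} [MetricSpace α] [MeasurableSpace α] [OpensMeasurableSpace α]
  {μ : Measure α} {X Y : Set α} {K : α → α → ℂ} {x x' : α} {c υ N r : ℝ}

theorem norm_qop_distRamp_le (hυ : 0 < υ) (hc : 0 ≤ c) (hN : 0 ≤ N) (hr : 0 < r)
    (hdist : dist x x' = r) (hK : ∀ y ∈ Y, x' ≠ y → ‖K x' y‖ ≤ N / dist x' y ^ υ)
    (hreg : ∀ t, 0 < t → t ≤ 2 * r → μ (ball x' t ∩ Y) ≤ ENNReal.ofReal (c * t ^ υ)) :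
    ‖Qop μ Y K (distRamp x r) x'‖ ≤ 2 * (2 ^ (υ + 1) * c * N) := by
  have hx' : distRamp x r x' = 1 := distRamp_eq_one hr hdist.ge
  -- the integrand vanishes off `B(x, r) ⊆ B(x', 2r)`
  have hfar : ∫⁻ y in Y \ ball x' (2 * r), ‖K x' y * (distRamp x r x' - distRamp x r y)‖ₑ ∂μ
      = 0 := by
    refine nonpos_iff_eq_zero.1 ((setLIntegral_mono measurable_const fun y hy => ?_).trans_eq
      (lintegral_zero (μ := μ.restrict _)))
    have hy' : 2 * r ≤ dist x' y := by simpa [dist_comm] using hy.2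
    have : r ≤ dist x y := by linarith [dist_triangle x' x y, dist_comm x x']
    rw [hx', distRamp_eq_one hr this, sub_self, mul_zero, enorm_zero]
  apply norm_integral_le_of_lintegral_enorm_le (by positivity)
  rw [← lintegral_inter_add_sdiff _ Y measurableSet_ball, hfar, add_zero]
  refine (lintegral_inter_ball_enorm_mul_sub_le hυ hc hN hr (by positivity) hK
    (fun y => (norm_distRamp_sub_le hr x' y).trans (min_le_right _ _)) hreg).trans_eq ?_
  congr 1
  field_simp

theorem norm_setIntegral_sdiff_ball_le_norm_qop_sub (hYm : MeasurableSet Y) (hY : μ Y < ⊤)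
    (hυ : 0 < υ) (hc : 0 ≤ c) (hN : 0 ≤ N) (hr : 0 < r)
    (hKm : AEStronglyMeasurable (K x) (μ.restrict Y)) (hx : x ∈ X) (hx' : x' ∈ X)
    (hdist : dist x x' = r) (hK : ∀ z ∈ X, ∀ y ∈ Y, z ≠ y → ‖K z y‖ ≤ N / dist z y ^ υ)
    (hreg : ∀ z ∈ X, ∀ t, 0 < t → t ≤ 2 * r → μ (ball z t ∩ Y) ≤ ENNReal.ofReal (c * t ^ υ)) :
    ‖∫ y in Y \ ball x r, K x y ∂μ‖ ≤
      ‖Qop μ Y K (distRamp x r) x - Qop μ Y K (distRamp x r) x'‖ +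
        3 * (2 ^ (υ + 1) * c * N) := by
  set g := distRamp x r
  have hgx : ∀ y, ‖g x - g y‖ ≤ min 1 (dist x y / r) := norm_distRamp_sub_le hr x
  have hregx : ∀ t, 0 < t → t ≤ r → μ (ball x t ∩ Y) ≤ ENNReal.ofReal (c * t ^ υ) :=
    fun t ht htr => hreg x hx t ht (by linarith)
  have hint : IntegrableOn (fun y => K x y * (g x - g y)) Y μ :=
    integrableOn_mul_sub hY hυ hc hN hr hKm continuous_distRamp (hK x hx) hgx hregx
  set I := ∫ y in Y ∩ ball x r, K x y * (g x - g y) ∂μ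
  have hI : ‖I‖ ≤ 2 ^ (υ + 1) * c * N := by
    refine norm_integral_le_of_lintegral_enorm_le (by positivity)
      ((lintegral_inter_ball_enorm_mul_sub_le hυ hc hN hr hr (hK x hx)
        (fun y => (hgx y).trans (min_le_right _ _)) hregx).trans_eq ?_)
    congr 1
    field_simp
  have hfar : ∫ y in Y \ ball x r, K x y * (g x - g y) ∂μ = -∫ y in Y \ ball x r, K x y ∂μ := by
    rw [← integral_neg]
    refine setIntegral_congr_fun (hYm.diff measurableSet_ball) fun y hy => ?_
    rw [show g x = 0 from distRamp_self,
      show g y = 1 from distRamp_eq_one hr (by simpa [dist_comm] using hy.2)]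
    ring
  have hsplit : ∫ y in Y \ ball x r, K x y ∂μ = I - Qop μ Y K g x := by
    rw [Qop, ← integral_inter_add_sdiff measurableSet_ball hint, hfar]
    ring
  have hx'bound := norm_qop_distRamp_le hυ hc hN hr hdist (hK x' hx') (hreg x' hx')
  calc ‖∫ y in Y \ ball x r, K x y ∂μ‖
      = ‖(I - Qop μ Y K g x') - (Qop μ Y K g x - Qop μ Y K g x')‖ := by rw [hsplit]; ring_nf
    _ ≤ ‖I‖ + ‖Qop μ Y K g x'‖ + ‖Qop μ Y K g x - Qop μ Y K g x'‖ :=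
        (norm_sub_le _ _).trans (by gcongr; exact norm_sub_le _ _)
    _ ≤ ‖Qop μ Y K g x - Qop μ Y K g x'‖ + 3 * (2 ^ (υ + 1) * c * N) := by linarith

end Qop

section Assumptions

variable {α : Type*} [MetricSpace α] {X Y : Set α} {υ : ℝ}

theorem exists_norm_le_div_dist_rpow_of_bddAbove_kernelSet₁ {K : α → α → ℂ}
    (h : BddAbove (kernelSet₁ X Y υ K)) :
    ∃ N, 0 ≤ N ∧ ∀ x ∈ X, ∀ y ∈ Y, x ≠ y → ‖K x y‖ ≤ N / dist x y ^ υ := by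
  obtain ⟨N, hN⟩ := h
  refine ⟨max N 0, le_max_right _ _, fun x hx y hy hxy => ?_⟩
  rw [le_div_iff₀ (Real.rpow_pos_of_pos (dist_pos.2 hxy) υ), mul_comm]
  exact (hN ⟨x, hx, y, hy, hxy, rfl⟩).trans (le_max_left _ _)

variable [MeasurableSpace α] {ν : Measure α}

theorem StronglyUpperAhlforsRegular.upperAhlforsRegular
    (h : StronglyUpperAhlforsRegular ν X Y υ) (hυ : 0 < υ) : UpperAhlforsRegular ν X Y υ := by
  obtain ⟨c, hc, r₀, hr₀, h⟩ := h
  refine ⟨c, hc, r₀, hr₀, fun x hx r hr hrr₀ => ?_⟩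
  simpa [Real.zero_rpow hυ.ne'] using h x hx 0 r le_rfl hr hrr₀

theorem UpperAhlforsRegular.exists_measure_ball_inter_le (h : UpperAhlforsRegular ν X Y υ) :
    ∃ c > 0, ∃ ρ > 0, ∀ x ∈ X, ∀ r, 0 < r → r ≤ ρ →
      ν (ball x r ∩ Y) ≤ ENNReal.ofReal (c * r ^ υ) := by
  obtain ⟨c, hc, r₀, hr₀, h⟩ := h
  obtain ⟨ρ, -, hρ, hρr₀⟩ := ENNReal.lt_iff_exists_real_btwn.1 hr₀
  exact ⟨c, hc, ρ, ENNReal.ofReal_pos.1 hρ, fun x hx r hr hrρ =>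
    h x hx r hr ((ENNReal.ofReal_le_ofReal hrρ).trans_lt hρr₀)⟩

end Assumptions

theorem stmt_7_general {M : Type*} [MetricSpace M] [MeasurableSpace M] [BorelSpace M]
    (X Y : Set M) (ν : Measure M) (hYm : MeasurableSet Y)
    (υ β s₂ s₃ : ℝ)
    (hυ : 0 < υ) (hβ0 : 0 < β) (hβ1 : β ≤ 1)
    (hYfin : ν Y < ⊤)
    (ha : ∃ a : ℝ, 0 < a ∧ ∀ ρ : ℝ, 0 < ρ → ρ < a → ∀ x' ∈ X, ∃ x'' ∈ X, dist x' x'' = ρ)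
    (hreg : StronglyUpperAhlforsRegular ν X Y υ)
    (Z : M → M → ℂ) (hZ : MemK X Y υ s₂ s₃ Z)
    (hQ : ∃ C : ℝ, 0 < C ∧ ∀ g : M → ℂ, IsHolderOn (X ∪ Y) β g →
      BoundedOnSet X (Qop ν Y Z g) ∧
      IsHolderOn X β (Qop ν Y Z g) ∧
      supNormOn X (Qop ν Y Z g) + holderSemi X β (Qop ν Y Z g) ≤
        C * holderSemi (X ∪ Y) β g) :
    BddAbove (maxFunSet ν X Y Z) := by
  obtain ⟨C, hC, hQC⟩ := hQ
  obtain ⟨a, ha0, hsphere⟩ := ha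
  obtain ⟨c, hc, ρ, hρ, hregX⟩ := (hreg.upperAhlforsRegular hυ).exists_measure_ball_inter_le
  obtain ⟨hZc, hZ₁, -⟩ := hZ
  obtain ⟨N, hN, hZN⟩ := exists_norm_le_div_dist_rpow_of_bddAbove_kernelSet₁ hZ₁
  have hT : 0 < min a (ρ / 2) := lt_min ha0 (by positivity)
  refine ⟨max (N / min a (ρ / 2) ^ υ * ν.real Y) (C + 3 * (2 ^ (υ + 1) * c * N)), ?_⟩
  rintro _ ⟨x, hx, r, hr, rfl⟩
  rcases le_or_gt (min a (ρ / 2)) r with hTr | hrT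
  · exact (norm_setIntegral_sdiff_ball_le hYfin hυ.le hN (hZN x hx) hT hTr).trans
      (le_max_left _ _)
  obtain ⟨x', hx', hxx'⟩ := hsphere r hr (hrT.trans_le (min_le_left _ _)) x hx
  obtain ⟨hQb, hQH, hQle⟩ := hQC _ (isHolderOn_distRamp (x := x) hr hβ0 hβ1 (X ∪ Y))
  have hQdiff := norm_sub_le_of_le_mul_holderSemi_distRamp hC.le hr hβ0 hβ1 hQb hQH hQle hx hx'
    hxx'
  have hZm : AEStronglyMeasurable (Z x) (ν.restrict Y) :=
    aestronglyMeasurable_restrict_of_continuousOn_sdiff_singleton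
      (hZc.comp (Continuous.prodMk_right x).continuousOn fun y hy => ⟨⟨hx, hy.1⟩, hy.2 ∘ Eq.symm⟩)
      hYm (measure_singleton_eq_zero_of_measure_ball_le hυ hρ fun t ht htρ =>
        (Measure.restrict_apply measurableSet_ball).trans_le (hregX x hx t ht htρ))
  have hreg2r : ∀ z ∈ X, ∀ t, 0 < t → t ≤ 2 * r → ν (ball z t ∩ Y) ≤ ENNReal.ofReal (c * t ^ υ) :=
    fun z hz t ht htr => hregX z hz t ht (by linarith [min_le_right a (ρ / 2)])
  exact (norm_setIntegral_sdiff_ball_le_norm_qop_sub hYm hYfin hυ hc.le hN hr hZm hx hx' hxx'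
    hZN hreg2r).trans (le_max_of_le_right (by linarith))

theorem stmt_7 {M : Type*} [MetricSpace M] [MeasurableSpace M] [BorelSpace M]
    (X Y : Set M) (ν : Measure M) (hYm : MeasurableSet Y)
    (υ β s₂ s₃ : ℝ)
    (hυ : 0 < υ) (hβ0 : 0 < β) (hβ1 : β ≤ 1) (hs₂ : β ≤ s₂) (hs₃0 : 0 < s₃) (hs₃1 : s₃ ≤ 1)
    (hball : ∀ x ∈ X, ∀ r : ℝ, 0 < r → ν (ball x r ∩ Y) < ⊤)
    (hYfin : ν Y < ⊤)
    (ha : ∃ a : ℝ, 0 < a ∧ ∀ ρ : ℝ, 0 < ρ → ρ < a → ∀ x' ∈ X, ∃ x'' ∈ X, dist x' x'' = ρ)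
    (h1 : s₂ - β = υ) (h2 : β < s₃)
    (hreg : StronglyUpperAhlforsRegular ν X Y υ)
    (Z : M → M → ℂ) (hZ : MemK X Y υ s₂ s₃ Z)
    (hQ : ∃ C : ℝ, 0 < C ∧ ∀ g : M → ℂ, IsHolderOn (X ∪ Y) β g →
      BoundedOnSet X (Qop ν Y Z g) ∧
      IsHolderOn X β (Qop ν Y Z g) ∧
      supNormOn X (Qop ν Y Z g) + holderSemi X β (Qop ν Y Z g) ≤
        C * holderSemi (X ∪ Y) β g) :
    BddAbove (maxFunSet ν X Y Z) :=
  stmt_7_general X Y ν hYm υ β s₂ s₃ hυ hβ0 hβ1 hYfin ha hreg Z hZ hQ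
end
end

section
/- Let (M,d) be a metric space and X, Y ⊆ M. Assume there exists a ∈ (0,∞) such that for each ρ ∈ (0,a) and each x' ∈ X there exists x'' ∈ X with d(x',x'') = ρ. Let υ_Y ∈ (0,∞), β ∈ (0,1], s₂ ∈ [β,∞), s₃ ∈ (0,1], with s₂ − β < υ_Y. Let ν be a measure on a σ-algebra of subsets of Y containing the Borel subsets of Y, with ν(B(x,r) ∩ Y) < ∞ for all x ∈ X and r > 0, and ν(Y) < ∞. Let Y be upper υ_Y-Ahlfors regular with respect to X and let Z ∈ 𝒦_{υ_Y,s₂,s₃}(X×Y). If there exists C > 0 such that for every g ∈ C^{0,β}(X∪Y) the function Q[Z,g,1] is bounded and min{β,s₃}-Hölder continuous on X with sup-norm plus Hölder seminorm at most C·|g|_β, then sup over x ∈ X and r ∈ (0, e^{−1/s₃}) of |∫_{Y\B(x,r)} Z(x,y) dν(y)| · r^β / max{r^β, r^{s₃}} is finite. -/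
open MeasureTheory Metric Set
open scoped ENNReal

noncomputable section

variable {M : Type*} [MetricSpace M] [MeasurableSpace M] [BorelSpace M]

/-!
Test `Q[Z,g,1]` against a radial cutoff `g` around `x ∈ X` that vanishes on `B(x, r/2)`, equals
`r^β` off `B(x, r)` and has `β`-Hölder seminorm at most `2^β`. Then
`Q[Z,g,1](x) = -r^β ∫_{Y \ B(x,r)} Z(x,·) - ∫_{Y ∩ B(x,r)} Z(x,·) g`, while for a point `x''` with
`d(x,x'') = 2r` the integrand of `Q[Z,g,1](x'')` is supported in `B(x,r)`, where `d(x'',·) ≥ r`.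
The size bound on `Z` and Ahlfors regularity make both integrals over `B(x,r)` of size `O(r^β)`,
and the Hölder bound on `Q[Z,g,1]` makes `Q[Z,g,1](x) - Q[Z,g,1](x'')` of size `O(r^{min β s₃})`.
Radii bounded away from `0` are handled by the size bound on `Z` and `ν(Y) < ∞` alone.
-/

lemma Real.abs_rpow_sub_rpow_le {β a b : ℝ} (hβ0 : 0 ≤ β) (hβ1 : β ≤ 1) (ha : 0 ≤ a)
    (hb : 0 ≤ b) : |a ^ β - b ^ β| ≤ |a - b| ^ β := by
  wlog hab : b ≤ a generalizing a b
  · rw [abs_sub_comm, abs_sub_comm a]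
    exact this hb ha (le_of_not_ge hab)
  have hmono : b ^ β ≤ a ^ β := Real.rpow_le_rpow hb hab hβ0
  have hsub : a ^ β ≤ (a - b) ^ β + b ^ β := by
    simpa using Real.rpow_add_le_add_rpow (sub_nonneg.2 hab) hb hβ0 hβ1
  rw [abs_of_nonneg (sub_nonneg.2 hmono), abs_of_nonneg (sub_nonneg.2 hab)]
  linarith

lemma mul_rpow_div_max_rpow_le {u r β s : ℝ} (hu : 0 ≤ u) (hr : 0 < r) :
    u * r ^ β / max (r ^ β) (r ^ s) ≤ u := by
  rw [mul_div_assoc]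
  exact mul_le_of_le_one_right hu (div_le_one_of_le₀ (le_max_left _ _)
    ((Real.rpow_pos_of_pos hr β).le.trans (le_max_left _ _)))

lemma div_max_rpow_le_of_le {u r β s A B : ℝ} (hr0 : 0 < r) (hr1 : r ≤ 1) (hβ1 : β ≤ 1)
    (hA : 0 ≤ A) (hB : 0 ≤ B) (hu : u ≤ A * r ^ β + B * (2 * r) ^ min β s) :
    u / max (r ^ β) (r ^ s) ≤ A + 2 * B := by
  set m := min β s
  have hrm : 0 < r ^ m := Real.rpow_pos_of_pos hr0 m
  have hrm_max : r ^ m ≤ max (r ^ β) (r ^ s) := by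
    rcases min_choice β s with h | h <;> simp [m, h]
  have h2m : (2 : ℝ) ^ m ≤ 2 := by
    simpa using Real.rpow_le_rpow_of_exponent_le one_le_two ((min_le_left β s).trans hβ1)
  have hu' : u ≤ (A + 2 * B) * r ^ m :=
    calc u ≤ A * r ^ β + B * (2 ^ m * r ^ m) := by
          rwa [← Real.mul_rpow zero_le_two hr0.le]
      _ ≤ A * r ^ m + B * (2 * r ^ m) := by
          gcongr A * ?_ + B * (?_ * _)
          exact Real.rpow_le_rpow_of_exponent_ge hr0 hr1 (min_le_left β s)
      _ = (A + 2 * B) * r ^ m := by ring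
  rw [div_le_iff₀ (hrm.trans_le hrm_max)]
  exact hu'.trans (mul_le_mul_of_nonneg_left hrm_max (by positivity))

lemma norm_setIntegral_le_of_measureReal_le {α : Type*} [MeasurableSpace α] {ν : Measure α}
    {S : Set α} {f : α → ℂ} {B c : ℝ} (hS : ν S < ⊤) (hB0 : 0 ≤ B) (hB : ∀ y ∈ S, ‖f y‖ ≤ B)
    (hνS : ν.real S ≤ c) : ‖∫ y in S, f y ∂ν‖ ≤ B * c :=
  (norm_setIntegral_le_of_norm_le_const hS hB).trans (mul_le_mul_of_nonneg_left hνS hB0)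

lemma supNormOn_nonneg {α : Type*} (D : Set α) (f : α → ℂ) : 0 ≤ supNormOn D f :=
  Real.sSup_nonneg fun _ ⟨_, _, ht⟩ => ht ▸ norm_nonneg _

section

variable {α : Type*} [MetricSpace α]

lemma UpperAhlforsRegular.exists_measureReal_le [MeasurableSpace α] {ν : Measure α}
    {X Y : Set α} {υ : ℝ} (h : UpperAhlforsRegular ν X Y υ) :
    ∃ c, 0 < c ∧ ∃ δ, 0 < δ ∧
      ∀ x ∈ X, ∀ r : ℝ, 0 < r → r < δ → ν.real (Y ∩ ball x r) ≤ c * r ^ υ := by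
  obtain ⟨c, hc, r₀, hr₀, hreg⟩ := h
  obtain ⟨δ, hδ, hδr₀⟩ : ∃ δ : ℝ, 0 < δ ∧ ∀ r : ℝ, 0 < r → r < δ → ENNReal.ofReal r < r₀ := by
    rcases eq_or_ne r₀ ⊤ with rfl | hr₀top
    · exact ⟨1, one_pos, fun r _ _ => ENNReal.ofReal_lt_top⟩
    · refine ⟨r₀.toReal, ENNReal.toReal_pos hr₀.ne' hr₀top, fun r _ hr => ?_⟩
      exact (ENNReal.ofReal_lt_iff_lt_toReal (by linarith) hr₀top).2 hr
  refine ⟨c, hc, δ, hδ, fun x hx r hr hrδ => ?_⟩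
  rw [inter_comm]
  exact ENNReal.toReal_le_of_le_ofReal (by positivity) (hreg x hx r hr (hδr₀ r hr hrδ))

section HolderSeminorm

variable {D : Set α} {β : ℝ} {g : α → ℂ}

lemma isHolderOn_of_norm_sub_le {L : ℝ}
    (hg : ∀ z w, z ≠ w → ‖g z - g w‖ ≤ L * dist z w ^ β) : IsHolderOn D β g := by
  refine ⟨L, ?_⟩
  rintro t ⟨z, -, w, -, hzw, rfl⟩
  rw [div_le_iff₀ (Real.rpow_pos_of_pos (dist_pos.2 hzw) β)]
  exact hg z w hzw

lemma holderSemi_le_of_norm_sub_le {L : ℝ} (hL : 0 ≤ L)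
    (hg : ∀ z w, z ≠ w → ‖g z - g w‖ ≤ L * dist z w ^ β) : holderSemi D β g ≤ L := by
  refine Real.sSup_le ?_ hL
  rintro t ⟨z, -, w, -, hzw, rfl⟩
  rw [div_le_iff₀ (Real.rpow_pos_of_pos (dist_pos.2 hzw) β)]
  exact hg z w hzw

lemma IsHolderOn.norm_sub_le (hg : IsHolderOn D β g) {z w : α} (hz : z ∈ D) (hw : w ∈ D)
    (hzw : z ≠ w) : ‖g z - g w‖ ≤ holderSemi D β g * dist z w ^ β := by
  rw [← div_le_iff₀ (Real.rpow_pos_of_pos (dist_pos.2 hzw) β)]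
  exact le_csSup hg ⟨z, hz, w, hw, hzw, rfl⟩

end HolderSeminorm

section KernelSize

variable {X Y : Set α} {υ : ℝ} {Z : α → α → ℂ} {x : α}

lemma sSup_kernelSet₁_nonneg : 0 ≤ sSup (kernelSet₁ X Y υ Z) :=
  Real.sSup_nonneg fun _ ⟨_, _, _, _, _, ht⟩ => ht ▸ by positivity

lemma norm_le_sSup_kernelSet₁_div (hK : BddAbove (kernelSet₁ X Y υ Z)) (hυ : 0 ≤ υ)
    (hx : x ∈ X) {y : α} (hy : y ∈ Y) {ρ : ℝ} (hρ : 0 < ρ) (hρd : ρ ≤ dist x y) :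
    ‖Z x y‖ ≤ sSup (kernelSet₁ X Y υ Z) / ρ ^ υ := by
  have hd : 0 < dist x y := hρ.trans_le hρd
  have hmem : dist x y ^ υ * ‖Z x y‖ ∈ kernelSet₁ X Y υ Z :=
    ⟨x, hx, y, hy, dist_pos.1 hd, rfl⟩
  rw [le_div_iff₀ (Real.rpow_pos_of_pos hρ υ), mul_comm]
  calc ρ ^ υ * ‖Z x y‖ ≤ dist x y ^ υ * ‖Z x y‖ := by gcongr
    _ ≤ sSup (kernelSet₁ X Y υ Z) := le_csSup hK hmem

lemma norm_setIntegral_sdiff_ball_le_s8 [MeasurableSpace α] {ν : Measure α}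
    (hK : BddAbove (kernelSet₁ X Y υ Z)) (hυ : 0 ≤ υ) (hYfin : ν Y < ⊤) (hx : x ∈ X)
    {δ r : ℝ} (hδ : 0 < δ) (hδr : δ ≤ r) :
    ‖∫ y in Y \ ball x r, Z x y ∂ν‖ ≤ sSup (kernelSet₁ X Y υ Z) / δ ^ υ * ν.real Y := by
  refine norm_setIntegral_le_of_measureReal_le ((measure_mono sdiff_subset).trans_lt hYfin)
    (div_nonneg sSup_kernelSet₁_nonneg (by positivity)) (fun y hy => ?_)
    (measureReal_mono sdiff_subset hYfin.ne)
  refine norm_le_sSup_kernelSet₁_div hK hυ hx hy.1 hδ (hδr.trans ?_)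
  simpa [dist_comm] using hy.2

lemma norm_kernel_mul_le_of_eq_zero (hK : BddAbove (kernelSet₁ X Y υ Z)) (hυ : 0 ≤ υ)
    (hx : x ∈ X) {h : α → ℂ} {ε B : ℝ} (hε : 0 < ε) (hB0 : 0 ≤ B) (hB : ∀ y, ‖h y‖ ≤ B)
    (hvan : ∀ y, dist y x < ε → h y = 0) {y : α} (hy : y ∈ Y) :
    ‖Z x y * h y‖ ≤ sSup (kernelSet₁ X Y υ Z) / ε ^ υ * B := by
  rcases lt_or_ge (dist y x) ε with hyx | hyx
  · rw [hvan y hyx, mul_zero, norm_zero]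
    exact mul_nonneg (div_nonneg sSup_kernelSet₁_nonneg (by positivity)) hB0
  · rw [norm_mul]
    exact mul_le_mul (norm_le_sSup_kernelSet₁_div hK hυ hx hy hε (by rwa [dist_comm]))
      (hB y) (norm_nonneg _) (div_nonneg sSup_kernelSet₁_nonneg (by positivity))

lemma continuousOn_kernel_mul_of_eq_zero
    (hZ : ContinuousOn (fun p : α × α => Z p.1 p.2) ((X ×ˢ Y) \ {p : α × α | p.1 = p.2}))
    (hx : x ∈ X) {h : α → ℂ} (hh : Continuous h) {ε : ℝ} (hε : 0 < ε)
    (hvan : ∀ y, dist y x < ε → h y = 0) : ContinuousOn (fun y => Z x y * h y) Y := by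
  intro y hy
  rcases eq_or_ne y x with rfl | hyx
  · refine (continuousWithinAt_const (b := (0 : ℂ))).congr_of_eventuallyEq ?_ ?_
    · filter_upwards [mem_nhdsWithin_of_mem_nhds (ball_mem_nhds y hε)] with z hz
      rw [hvan z hz, mul_zero]
    · rw [hvan y (by simpa using hε), mul_zero]
  · have hmaps : MapsTo (fun y => (x, y)) (Y \ {x}) ((X ×ˢ Y) \ {p : α × α | p.1 = p.2}) :=
      fun y hy => ⟨⟨hx, hy.1⟩, fun h => hy.2 h.symm⟩
    have hslice : ContinuousWithinAt (fun y => Z x y) (Y \ {x}) y :=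
      (hZ (x, y) (hmaps ⟨hy, hyx⟩)).comp
        (continuous_const.prodMk continuous_id).continuousWithinAt hmaps
    exact (continuousWithinAt_sdiff_singleton.1 hslice).mul hh.continuousWithinAt

lemma integrableOn_kernel_mul_of_eq_zero [MeasurableSpace α] [OpensMeasurableSpace α]
    {ν : Measure α} {s₂ s₃ : ℝ} (hZ : MemK X Y υ s₂ s₃ Z) (hυ : 0 ≤ υ)
    (hYm : MeasurableSet Y) (hYfin : ν Y < ⊤) (hx : x ∈ X) {h : α → ℂ} (hh : Continuous h)
    {ε B : ℝ} (hε : 0 < ε) (hB0 : 0 ≤ B) (hB : ∀ y, ‖h y‖ ≤ B)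
    (hvan : ∀ y, dist y x < ε → h y = 0) : IntegrableOn (fun y => Z x y * h y) Y ν :=
  IntegrableOn.of_bound hYfin
    ((continuousOn_kernel_mul_of_eq_zero hZ.1 hx hh hε hvan).aestronglyMeasurable hYm) _
    ((ae_restrict_iff' hYm).2 (ae_of_all _ fun _ hy =>
      norm_kernel_mul_le_of_eq_zero hZ.2.1 hυ hx hε hB0 hB hvan hy))

end KernelSize

section Cutoff

def cutoff (x : α) (r β : ℝ) (z : α) : ℝ := min (max (2 * dist z x - r) 0) r ^ β

variable {x : α} {r β : ℝ}

lemma cutoff_nonneg (hr : 0 ≤ r) (z : α) : 0 ≤ cutoff x r β z :=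
  Real.rpow_nonneg (le_min (le_max_right _ _) hr) _

lemma cutoff_le (hr : 0 ≤ r) (hβ : 0 ≤ β) (z : α) : cutoff x r β z ≤ r ^ β :=
  Real.rpow_le_rpow (le_min (le_max_right _ _) hr) (min_le_right _ _) hβ

lemma cutoff_eq_zero (hr : 0 ≤ r) (hβ : β ≠ 0) {z : α} (hz : dist z x ≤ r / 2) :
    cutoff x r β z = 0 := by
  rw [cutoff, max_eq_right (by linarith), min_eq_left hr, Real.zero_rpow hβ]

lemma cutoff_eq_rpow {z : α} (hz : r ≤ dist z x) : cutoff x r β z = r ^ β := by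
  rw [cutoff, max_eq_left (by linarith [dist_nonneg (x := z) (y := x)]),
    min_eq_right (by linarith)]

lemma abs_cutoff_sub_cutoff_le (hr : 0 ≤ r) (hβ0 : 0 ≤ β) (hβ1 : β ≤ 1) (z w : α) :
    |cutoff x r β z - cutoff x r β w| ≤ 2 ^ β * dist z w ^ β := by
  have hramp : |min (max (2 * dist z x - r) 0) r - min (max (2 * dist w x - r) 0) r| ≤
      2 * dist z w :=
    calc _ ≤ |max (2 * dist z x - r) 0 - max (2 * dist w x - r) 0| := by
          simpa using abs_min_sub_min_le_max (max (2 * dist z x - r) 0) r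
            (max (2 * dist w x - r) 0) r
      _ ≤ |(2 * dist z x - r) - (2 * dist w x - r)| := abs_max_sub_max_le_abs _ _ _
      _ = 2 * |dist z x - dist w x| := by
          rw [show (2 * dist z x - r) - (2 * dist w x - r) = 2 * (dist z x - dist w x) by ring,
            abs_mul, abs_two]
      _ ≤ 2 * dist z w := by gcongr; exact abs_dist_sub_le z w x
  calc |cutoff x r β z - cutoff x r β w|
      ≤ |min (max (2 * dist z x - r) 0) r - min (max (2 * dist w x - r) 0) r| ^ β :=
        Real.abs_rpow_sub_rpow_le hβ0 hβ1 (le_min (le_max_right _ _) hr)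
          (le_min (le_max_right _ _) hr)
    _ ≤ (2 * dist z w) ^ β := Real.rpow_le_rpow (abs_nonneg _) hramp hβ0
    _ = 2 ^ β * dist z w ^ β := Real.mul_rpow zero_le_two dist_nonneg

lemma continuous_cutoff (hβ : 0 ≤ β) : Continuous (cutoff x r β) :=
  (Real.continuous_rpow_const hβ).comp (by fun_prop)

lemma norm_ofReal_cutoff_le (hr : 0 ≤ r) (hβ : 0 ≤ β) (z : α) :
    ‖(cutoff x r β z : ℂ)‖ ≤ r ^ β := by
  rw [Complex.norm_real, Real.norm_of_nonneg (cutoff_nonneg hr z)]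
  exact cutoff_le hr hβ z

lemma norm_ofReal_cutoff_sub_le (hr : 0 ≤ r) (hβ : 0 ≤ β) (z w : α) :
    ‖(cutoff x r β z : ℂ) - cutoff x r β w‖ ≤ r ^ β := by
  rw [← Complex.ofReal_sub, Complex.norm_real, Real.norm_eq_abs, abs_sub_le_iff]
  constructor <;> linarith [cutoff_nonneg (x := x) (β := β) hr z,
    cutoff_nonneg (x := x) (β := β) hr w, cutoff_le (x := x) hr hβ z, cutoff_le (x := x) hr hβ w]

end Cutoff

section TestAgainstCutoff

variable [MeasurableSpace α] {ν : Measure α} {X Y : Set α} {υ r β c : ℝ} {Z : α → α → ℂ}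
  {x : α}

lemma integrableOn_kernel_mul_cutoff [OpensMeasurableSpace α] {s₂ s₃ : ℝ}
    (hZ : MemK X Y υ s₂ s₃ Z) (hυ : 0 ≤ υ) (hβ : 0 < β) (hYm : MeasurableSet Y)
    (hYfin : ν Y < ⊤) (hx : x ∈ X) (hr : 0 < r) :
    IntegrableOn (fun y => Z x y * cutoff x r β y) Y ν :=
  integrableOn_kernel_mul_of_eq_zero hZ hυ hYm hYfin hx
    (Complex.continuous_ofReal.comp (continuous_cutoff hβ.le)) (half_pos hr) (by positivity)
    (norm_ofReal_cutoff_le hr.le hβ.le) fun y hy => by simp [cutoff_eq_zero hr.le hβ.ne' hy.le]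

lemma norm_setIntegral_inter_ball_kernel_mul_cutoff_le (hK : BddAbove (kernelSet₁ X Y υ Z))
    (hυ : 0 ≤ υ) (hβ : 0 < β) (hYfin : ν Y < ⊤) (hx : x ∈ X) (hr : 0 < r)
    (hAhl : ν.real (Y ∩ ball x r) ≤ c * r ^ υ) :
    ‖∫ y in Y ∩ ball x r, Z x y * cutoff x r β y ∂ν‖ ≤
      c * sSup (kernelSet₁ X Y υ Z) * 2 ^ υ * r ^ β := by
  have hbound : ∀ y ∈ Y ∩ ball x r, ‖Z x y * cutoff x r β y‖ ≤
      sSup (kernelSet₁ X Y υ Z) / (r / 2) ^ υ * r ^ β := fun y hy =>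
    norm_kernel_mul_le_of_eq_zero hK hυ hx (half_pos hr) (by positivity)
      (norm_ofReal_cutoff_le hr.le hβ.le) (fun y hy => by simp [cutoff_eq_zero hr.le hβ.ne' hy.le])
      hy.1
  refine (norm_setIntegral_le_of_measureReal_le ((measure_mono inter_subset_left).trans_lt hYfin)
    (by positivity [sSup_kernelSet₁_nonneg (X := X) (Y := Y) (υ := υ) (Z := Z)]) hbound
    hAhl).trans_eq ?_
  have : 0 < r ^ υ := Real.rpow_pos_of_pos hr υ
  rw [Real.div_rpow hr.le zero_le_two]
  field_simp

lemma Qop_cutoff_self [OpensMeasurableSpace α] (hYm : MeasurableSet Y) (hr : 0 ≤ r)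
    (hβ : β ≠ 0) (hint : IntegrableOn (fun y => Z x y * cutoff x r β y) Y ν) :
    Qop ν Y Z (fun z => (cutoff x r β z : ℂ)) x =
      -((∫ y in Y \ ball x r, Z x y ∂ν) * (r ^ β : ℝ) +
        ∫ y in Y ∩ ball x r, Z x y * cutoff x r β y ∂ν) := by
  have hx : cutoff x r β x = 0 := cutoff_eq_zero hr hβ (by rw [dist_self]; positivity)
  have houter : ∫ y in Y \ ball x r, Z x y * cutoff x r β y ∂ν =
      (∫ y in Y \ ball x r, Z x y ∂ν) * (r ^ β : ℝ) := by
    rw [← integral_mul_const]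
    refine setIntegral_congr_fun (hYm.diff measurableSet_ball) fun y hy => ?_
    rw [cutoff_eq_rpow (not_lt.1 hy.2)]
  simp only [Qop, hx, Complex.ofReal_zero, zero_sub, mul_neg, integral_neg]
  rw [← integral_inter_add_sdiff measurableSet_ball hint, houter, add_comm]

lemma norm_Qop_cutoff_le_of_dist_eq (hK : BddAbove (kernelSet₁ X Y υ Z)) (hυ : 0 ≤ υ)
    (hYm : MeasurableSet Y) (hYfin : ν Y < ⊤) {x'' : α} (hx'' : x'' ∈ X) (hr : 0 < r)
    (hβ : 0 ≤ β) (hxx'' : dist x x'' = 2 * r) (hAhl : ν.real (Y ∩ ball x r) ≤ c * r ^ υ) :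
    ‖Qop ν Y Z (fun z => (cutoff x r β z : ℂ)) x''‖ ≤ c * sSup (kernelSet₁ X Y υ Z) * r ^ β := by
  have hcut'' : cutoff x r β x'' = r ^ β := cutoff_eq_rpow (by rw [dist_comm]; linarith)
  have hvan : ∀ y, r ≤ dist y x → (cutoff x r β x'' : ℂ) - cutoff x r β y = 0 := fun y hy => by
    rw [hcut'', cutoff_eq_rpow hy, sub_self]
  -- points of `B(x'', r)` lie outside `B(x, r)`, where the cutoff is already `r^β`
  have hvan'' : ∀ y, dist y x'' < r → (cutoff x r β x'' : ℂ) - cutoff x r β y = 0 := fun y hy =>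
    hvan y (by linarith [dist_triangle x y x'', dist_comm x y])
  rw [Qop, setIntegral_eq_of_subset_of_forall_sdiff_eq_zero hYm inter_subset_left
    fun y hy => by rw [hvan y (not_lt.1 fun h => hy.2 ⟨hy.1, h⟩), mul_zero]]
  have hbound : ∀ y ∈ Y ∩ ball x r, ‖Z x'' y * ((cutoff x r β x'' : ℂ) - cutoff x r β y)‖ ≤
      sSup (kernelSet₁ X Y υ Z) / r ^ υ * r ^ β := fun y hy =>
    norm_kernel_mul_le_of_eq_zero hK hυ hx'' hr (by positivity)
      (norm_ofReal_cutoff_sub_le hr.le hβ x'') hvan'' hy.1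
  refine (norm_setIntegral_le_of_measureReal_le ((measure_mono inter_subset_left).trans_lt hYfin)
    (by positivity [sSup_kernelSet₁_nonneg (X := X) (Y := Y) (υ := υ) (Z := Z)]) hbound
    hAhl).trans_eq ?_
  have : 0 < r ^ υ := Real.rpow_pos_of_pos hr υ
  field_simp

lemma norm_setIntegral_sdiff_ball_mul_rpow_le [OpensMeasurableSpace α] {s₂ s₃ θ C : ℝ}
    (hZ : MemK X Y υ s₂ s₃ Z) (hυ : 0 ≤ υ) (hβ0 : 0 < β) (hβ1 : β ≤ 1) (hC : 0 ≤ C)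
    (hYm : MeasurableSet Y) (hYfin : ν Y < ⊤) (hx : x ∈ X) {x'' : α} (hx'' : x'' ∈ X)
    (hr : 0 < r) (hxx'' : dist x x'' = 2 * r) (hAhl : ν.real (Y ∩ ball x r) ≤ c * r ^ υ)
    (hQ : ∀ g, IsHolderOn (X ∪ Y) β g → IsHolderOn X θ (Qop ν Y Z g) ∧
      holderSemi X θ (Qop ν Y Z g) ≤ C * holderSemi (X ∪ Y) β g) :
    ‖∫ y in Y \ ball x r, Z x y ∂ν‖ * r ^ β ≤
      c * sSup (kernelSet₁ X Y υ Z) * (1 + 2 ^ υ) * r ^ β + C * 2 ^ β * (2 * r) ^ θ := by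
  set g : α → ℂ := fun z => (cutoff x r β z : ℂ)
  have hg_holder : ∀ z w, z ≠ w → ‖g z - g w‖ ≤ 2 ^ β * dist z w ^ β := fun z w _ => by
    simpa [g, ← Complex.ofReal_sub] using abs_cutoff_sub_cutoff_le hr.le hβ0.le hβ1 z w
  obtain ⟨hQH, hQs⟩ := hQ g (isHolderOn_of_norm_sub_le hg_holder)
  have hQdiff : ‖Qop ν Y Z g x - Qop ν Y Z g x''‖ ≤ C * 2 ^ β * (2 * r) ^ θ := by
    have hxx : x ≠ x'' := fun h => by rw [h, dist_self] at hxx''; linarith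
    calc _ ≤ holderSemi X θ (Qop ν Y Z g) * dist x x'' ^ θ := hQH.norm_sub_le hx hx'' hxx
      _ ≤ C * 2 ^ β * (2 * r) ^ θ := by
        rw [hxx'']
        gcongr
        exact hQs.trans (by gcongr; exact holderSemi_le_of_norm_sub_le (by positivity) hg_holder)
  have hQx'' := norm_Qop_cutoff_le_of_dist_eq hZ.2.1 hυ hYm hYfin hx'' hr hβ0.le hxx'' hAhl
  have hinner := norm_setIntegral_inter_ball_kernel_mul_cutoff_le hZ.2.1 hυ hβ0 hYfin hx hr hAhl
  have hQx : Qop ν Y Z g x + ∫ y in Y ∩ ball x r, Z x y * g y ∂ν =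
      -((∫ y in Y \ ball x r, Z x y ∂ν) * (r ^ β : ℝ)) := by
    rw [Qop_cutoff_self hYm hr.le hβ0.ne'
      (integrableOn_kernel_mul_cutoff hZ hυ hβ0 hYm hYfin hx hr)]
    ring
  calc ‖∫ y in Y \ ball x r, Z x y ∂ν‖ * r ^ β
      = ‖(Qop ν Y Z g x - Qop ν Y Z g x'') + Qop ν Y Z g x'' +
          ∫ y in Y ∩ ball x r, Z x y * g y ∂ν‖ := by
        rw [sub_add_cancel, hQx, norm_neg, norm_mul, Complex.norm_real,
          Real.norm_of_nonneg (by positivity)]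
    _ ≤ ‖Qop ν Y Z g x - Qop ν Y Z g x''‖ + ‖Qop ν Y Z g x''‖ +
          ‖∫ y in Y ∩ ball x r, Z x y * g y ∂ν‖ := norm_add₃_le
    _ ≤ C * 2 ^ β * (2 * r) ^ θ + c * sSup (kernelSet₁ X Y υ Z) * r ^ β +
          c * sSup (kernelSet₁ X Y υ Z) * 2 ^ υ * r ^ β := by gcongr
    _ = _ := by ring

end TestAgainstCutoff

end

theorem stmt_8_general {M : Type*} [MetricSpace M] [MeasurableSpace M] [BorelSpace M]
    (X Y : Set M) (ν : Measure M) (hYm : MeasurableSet Y)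
    (υ β s₂ s₃ : ℝ)
    (hυ : 0 < υ) (hβ0 : 0 < β) (hβ1 : β ≤ 1) (hs₃0 : 0 < s₃)
    (hYfin : ν Y < ⊤)
    (ha : ∃ a : ℝ, 0 < a ∧ ∀ ρ : ℝ, 0 < ρ → ρ < a → ∀ x' ∈ X, ∃ x'' ∈ X, dist x' x'' = ρ)
    (hreg : UpperAhlforsRegular ν X Y υ)
    (Z : M → M → ℂ) (hZ : MemK X Y υ s₂ s₃ Z)
    (hQ : ∃ C : ℝ, 0 < C ∧ ∀ g : M → ℂ, IsHolderOn (X ∪ Y) β g →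
      BoundedOnSet X (Qop ν Y Z g) ∧
      IsHolderOn X (min β s₃) (Qop ν Y Z g) ∧
      supNormOn X (Qop ν Y Z g) + holderSemi X (min β s₃) (Qop ν Y Z g) ≤
        C * holderSemi (X ∪ Y) β g) :
    BddAbove {t : ℝ | ∃ x ∈ X, ∃ r : ℝ, 0 < r ∧ r < Real.exp (-1 / s₃) ∧
      t = ‖∫ y in Y \ ball x r, Z x y ∂ν‖ * r ^ β /
        max (r ^ β) (r ^ s₃)} := by
  obtain ⟨c, hc, δ₀, hδ₀, hAhl⟩ := hreg.exists_measureReal_le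
  obtain ⟨a, ha0, hXd⟩ := ha
  obtain ⟨C, hC, hQ⟩ := hQ
  have hQ' : ∀ g, IsHolderOn (X ∪ Y) β g → IsHolderOn X (min β s₃) (Qop ν Y Z g) ∧
      holderSemi X (min β s₃) (Qop ν Y Z g) ≤ C * holderSemi (X ∪ Y) β g := fun g hg =>
    ⟨(hQ g hg).2.1, by linarith [(hQ g hg).2.2, supNormOn_nonneg X (Qop ν Y Z g)]⟩
  have hK : 0 ≤ sSup (kernelSet₁ X Y υ Z) := sSup_kernelSet₁_nonneg
  set δ := min (a / 2) δ₀
  have hδ : 0 < δ := lt_min (half_pos ha0) hδ₀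
  refine ⟨max (sSup (kernelSet₁ X Y υ Z) / δ ^ υ * ν.real Y)
    (c * sSup (kernelSet₁ X Y υ Z) * (1 + 2 ^ υ) + 2 * (C * 2 ^ β)), ?_⟩
  rintro t ⟨x, hx, r, hr, hre, rfl⟩
  rcases le_or_gt δ r with hδr | hrδ
  · exact le_max_of_le_left <| (mul_rpow_div_max_rpow_le (norm_nonneg _) hr).trans
      (norm_setIntegral_sdiff_ball_le_s8 hZ.2.1 hυ.le hYfin hx hδ hδr)
  · obtain ⟨x'', hx'', hxx''⟩ :=
      hXd (2 * r) (by positivity) (by linarith [min_le_left (a / 2) δ₀]) x hx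
    have hr1 : r ≤ 1 := hre.le.trans (Real.exp_le_one_iff.2 (by rw [neg_div]; simp [hs₃0.le]))
    exact le_max_of_le_right <| div_max_rpow_le_of_le hr hr1 hβ1 (by positivity) (by positivity) <|
      norm_setIntegral_sdiff_ball_mul_rpow_le hZ hυ.le hβ0 hβ1 hC.le hYm hYfin hx hx'' hr hxx''
        (hAhl x hx r hr (by linarith [min_le_right (a / 2) δ₀])) hQ'

theorem stmt_8 {M : Type*} [MetricSpace M] [MeasurableSpace M] [BorelSpace M]
    (X Y : Set M) (ν : Measure M) (hYm : MeasurableSet Y)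
    (υ β s₂ s₃ : ℝ)
    (hυ : 0 < υ) (hβ0 : 0 < β) (hβ1 : β ≤ 1) (hs₂ : β ≤ s₂) (hs₃0 : 0 < s₃) (hs₃1 : s₃ ≤ 1)
    (hball : ∀ x ∈ X, ∀ r : ℝ, 0 < r → ν (ball x r ∩ Y) < ⊤)
    (hYfin : ν Y < ⊤)
    (ha : ∃ a : ℝ, 0 < a ∧ ∀ ρ : ℝ, 0 < ρ → ρ < a → ∀ x' ∈ X, ∃ x'' ∈ X, dist x' x'' = ρ)
    (h1 : s₂ - β < υ)
    (hreg : UpperAhlforsRegular ν X Y υ)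
    (Z : M → M → ℂ) (hZ : MemK X Y υ s₂ s₃ Z)
    (hQ : ∃ C : ℝ, 0 < C ∧ ∀ g : M → ℂ, IsHolderOn (X ∪ Y) β g →
      BoundedOnSet X (Qop ν Y Z g) ∧
      IsHolderOn X (min β s₃) (Qop ν Y Z g) ∧
      supNormOn X (Qop ν Y Z g) + holderSemi X (min β s₃) (Qop ν Y Z g) ≤
        C * holderSemi (X ∪ Y) β g) :
    BddAbove {t : ℝ | ∃ x ∈ X, ∃ r : ℝ, 0 < r ∧ r < Real.exp (-1 / s₃) ∧
      t = ‖∫ y in Y \ ball x r, Z x y ∂ν‖ * r ^ β /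
        max (r ^ β) (r ^ s₃)} :=
  stmt_8_general X Y ν hYm υ β s₂ s₃ hυ hβ0 hβ1 hs₃0 hYfin ha hreg Z hZ hQ
end
end
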